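/- arXiv:2208.08383 — 5 statements merged into one kernel-verified Lean document; each statement's English description precedes it below -/
import Mathlib

section
/- Define a family of real numbers p : ℕ → ℕ → ℝ by p 0 0 = 1, p 0 l = 0 for l ≥ 1, and recursively p (n+1) l = p n l · ((n+1−l)/(n+2)) + p n (l−1) · (l/(n+2)) for n ∈ ℕ and l ∈ ℕ (where the term p n (l−1) · (l/(n+2)) is interpreted as 0 when l = 0). Then for every n ∈ ℕ one has p n l = 1/(n+1) for all l ≤ n, and p n l = 0 for all l > n. (Equivalently: the Markov chain (L_n) with L_0 = 0 and transition probabilities P[L_{n+1} = l | L_n = l] = (n+1−l)/(n+2), P[L_{n+1} = l+1 | L_n = l] = (l+1)/(n+2) satisfies L_n ~ Uniform{0,1,…,n} for every n.) -/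
/-! The uniform profile on `{0, …, n}` is carried by one step of the chain to the uniform profile
on `{0, …, n+1}`: for `l ≤ n+1` the stay and move contributions are `(n+1-l)/((n+1)(n+2))` and
`l/((n+1)(n+2))`, which add up to `1/(n+2)`. Since the recursion determines `p (n+1)` from `p n`,
induction on `n` gives `p n = uniform n`. -/

noncomputable def chainStep (q : ℕ → ℝ) (n l : ℕ) : ℝ :=
  q l * (((n : ℝ) + 1 - (l : ℝ)) / ((n : ℝ) + 2)) +
    (if l = 0 then 0 else q (l - 1) * ((l : ℝ) / ((n : ℝ) + 2)))

noncomputable def uniformProfile (n l : ℕ) : ℝ :=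
  if l ≤ n then 1 / ((n : ℝ) + 1) else 0

theorem chainStep_uniformProfile (n l : ℕ) :
    chainStep (uniformProfile n) n l = uniformProfile (n + 1) l := by
  have hn1 : (n : ℝ) + 1 ≠ 0 := by positivity
  have hn2 : (n : ℝ) + 2 ≠ 0 := by positivity
  unfold chainStep uniformProfile
  rcases Nat.eq_zero_or_pos l with rfl | hl0
  · simp only [zero_le, if_true]
    push_cast
    field_simp
    ring
  rcases lt_trichotomy l (n + 1) with hl | rfl | hl
  · rw [if_pos (by omega), if_neg (by omega), if_pos (by omega), if_pos hl.le]
    push_cast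
    field_simp
    ring
  · rw [if_neg (by omega), if_neg (by omega), if_pos (by omega), if_pos le_rfl]
    push_cast
    field_simp
    ring
  · rw [if_neg (by omega), if_neg (by omega), if_neg (by omega), if_neg (by omega)]
    ring

/-- The marginals of the Markov chain `(L_n)` with `L_0 = 0` and
transitions `P[L_{n+1} = l | L_n = l] = (n+1-l)/(n+2)`,
`P[L_{n+1} = l+1 | L_n = l] = (l+1)/(n+2)` are uniform on `{0,…,n}`:
if `p n l` satisfies the corresponding recursion, then `p n l = 1/(n+1)` for `l ≤ n`
and `p n l = 0` for `l > n`. -/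
theorem stmt0 (p : ℕ → ℕ → ℝ)
    (h00 : p 0 0 = 1)
    (h0l : ∀ l : ℕ, 1 ≤ l → p 0 l = 0)
    (hrec : ∀ n l : ℕ, p (n + 1) l =
      p n l * (((n : ℝ) + 1 - (l : ℝ)) / ((n : ℝ) + 2)) +
        (if l = 0 then 0 else p n (l - 1) * ((l : ℝ) / ((n : ℝ) + 2)))) :
    ∀ n l : ℕ, (l ≤ n → p n l = 1 / ((n : ℝ) + 1)) ∧ (n < l → p n l = 0) := by
  have hp : ∀ n, p n = uniformProfile n := by
    intro n
    induction n with
    | zero =>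
      funext l
      rcases Nat.eq_zero_or_pos l with rfl | hl
      · simp [uniformProfile, h00]
      · simp [uniformProfile, h0l l hl, hl.ne']
    | succ n ih =>
      funext l
      rw [hrec, ← chainStep_uniformProfile, ← ih, chainStep]
  intro n l
  rw [hp, uniformProfile]
  exact ⟨fun hl => if_pos hl, fun hl => if_neg (by omega)⟩
end

section
/- Let d ≥ 5 and let ρ be a probability measure on ℝ^d such that for every u ≠ 0 one has ρ({x : ⟨u, x⟩ = 0}) < 1. Let ρ̂(t) = ∫ exp(i⟨t,x⟩) dρ(x). Then there exists δ > 0 such that ∫_{B_0^δ} |1 − ρ̂(t)|^{−2} dt < ∞, where B_0^δ is the open Euclidean ball of radius δ centered at the origin and the integral is with respect to Lebesgue measure on ℝ^d. -/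
/-!
Write `t = r u` with `‖u‖ = 1`. On the ball of radius `R`, `1 - cos ⟪x, t⟫ ≥ (2 / π²) r² ⟪u, x⟫²`
as soon as `r R ≤ π`, so `1 - Re ρ̂(t)` dominates `r²` times the second moment of `⟪u, ·⟫`
restricted to that ball. No hyperplane carries all the mass, so for each `u` this moment is
positive once `R` is large; it is continuous in `u`, and compactness of the unit sphere yields
one `R` and a uniform positive lower bound. Hence `|1 - ρ̂(t)| ≥ c ‖t‖²` near `0`, and
`‖t‖⁻⁴` is integrable near the origin because `4 < d`.
-/

open MeasureTheory Metric Module ProbabilityTheory Real BoundedContinuousFunction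
open scoped RealInnerProductSpace

lemma two_div_pi_sq_mul_indicator_le_one_sub_cos {E : Type*} [NormedAddCommGroup E]
    [InnerProductSpace ℝ E] {R : ℝ} {t : E} (hR : ‖t‖ * R ≤ π) (x : E) :
    2 / π ^ 2 * (closedBall 0 R).indicator (fun x => ⟪t, x⟫ ^ 2) x ≤ 1 - cos ⟪x, t⟫ := by
  by_cases hx : x ∈ closedBall 0 R
  · have hle : |⟪t, x⟫| ≤ π :=
      (abs_real_inner_le_norm t x).trans <|
        (mul_le_mul_of_nonneg_left (mem_closedBall_zero_iff.mp hx) (norm_nonneg t)).trans hR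
    rw [Set.indicator_of_mem hx, real_inner_comm t x]
    linarith [cos_le_one_sub_mul_cos_sq hle]
  · rw [Set.indicator_of_notMem hx, mul_zero, sub_nonneg]
    exact cos_le_one _

section SecondMoment

variable {E : Type*} [NormedAddCommGroup E] [InnerProductSpace ℝ E] [MeasurableSpace E]

noncomputable def truncatedSecondMoment (ρ : Measure E) (R : ℝ) (u : E) : ℝ :=
  ∫ x in closedBall 0 R, ⟪u, x⟫ ^ 2 ∂ρ

variable {ρ : Measure E}

lemma truncatedSecondMoment_smul (R a : ℝ) (u : E) :
    truncatedSecondMoment ρ R (a • u) = a ^ 2 * truncatedSecondMoment ρ R u := by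
  simp only [truncatedSecondMoment, real_inner_smul_left, mul_pow, integral_const_mul]

variable [BorelSpace E]

lemma re_charFun [IsFiniteMeasure ρ] (t : E) : (charFun ρ t).re = ∫ x, cos ⟪x, t⟫ ∂ρ := by
  rw [charFun_eq_integral_innerProbChar, ← RCLike.re_eq_complex_re,
    ← integral_re ((innerProbChar t).integrable ρ)]
  simp [innerProbChar_apply]

variable [FiniteDimensional ℝ E]

section FiniteMeasure

variable [IsFiniteMeasure ρ]

lemma integrableOn_closedBall_inner_sq (R : ℝ) (u : E) :
    IntegrableOn (fun x => ⟪u, x⟫ ^ 2) (closedBall 0 R) ρ :=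
  (by fun_prop : Continuous fun x : E => ⟪u, x⟫ ^ 2).continuousOn.integrableOn_compact
    (isCompact_closedBall 0 R)

lemma monotone_truncatedSecondMoment (u : E) :
    Monotone fun R => truncatedSecondMoment ρ R u := fun _ R hRS =>
  setIntegral_mono_set (integrableOn_closedBall_inner_sq R u)
    (ae_of_all _ fun _ => sq_nonneg _) (closedBall_subset_closedBall hRS).eventuallyLE

lemma continuous_truncatedSecondMoment (R : ℝ) : Continuous (truncatedSecondMoment ρ R) :=
  continuous_parametric_integral_of_continuous (by fun_prop) (isCompact_closedBall 0 R)

lemma exists_truncatedSecondMoment_pos {u : E} (hu : ¬ ∀ᵐ x ∂ρ, ⟪u, x⟫ = 0) :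
    ∃ n : ℕ, 0 < truncatedSecondMoment ρ n u := by
  have hsupp : Function.support (fun x => ⟪u, x⟫ ^ 2) = {x | ⟪u, x⟫ ≠ 0} := by
    ext x; simp
  have hpos : ρ {x | ⟪u, x⟫ ≠ 0} ≠ 0 := by rwa [ae_iff] at hu
  have hcover : {x | ⟪u, x⟫ ≠ 0} = ⋃ n : ℕ, ({x | ⟪u, x⟫ ≠ 0} ∩ closedBall 0 n) := by
    rw [← Set.inter_iUnion, iUnion_closedBall_nat, Set.inter_univ]
  obtain ⟨n, hn⟩ : ∃ n : ℕ, ρ ({x | ⟪u, x⟫ ≠ 0} ∩ closedBall 0 n) ≠ 0 := by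
    by_contra! h
    exact hpos (hcover ▸ measure_iUnion_null h)
  refine ⟨n, ?_⟩
  rw [truncatedSecondMoment, setIntegral_pos_iff_support_of_nonneg_ae
    (ae_of_all _ fun _ => sq_nonneg _) (integrableOn_closedBall_inner_sq _ u), hsupp]
  exact pos_iff_ne_zero.mpr hn

lemma exists_mul_norm_sq_le_truncatedSecondMoment
    (hρ : ∀ u : E, u ≠ 0 → ¬ ∀ᵐ x ∂ρ, ⟪u, x⟫ = 0) :
    ∃ (R : ℕ) (c : ℝ), 0 < c ∧ ∀ u, c * ‖u‖ ^ 2 ≤ truncatedSecondMoment ρ R u := by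
  obtain ⟨R, hR⟩ : ∃ R : ℕ, sphere (0 : E) 1 ⊆ {u | 0 < truncatedSecondMoment ρ R u} := by
    refine (isCompact_sphere 0 1).elim_directed_cover _
      (fun R => isOpen_lt continuous_const (continuous_truncatedSecondMoment _)) ?_
      (Monotone.directed_le fun m n hmn u hu =>
        hu.trans_le (monotone_truncatedSecondMoment u (Nat.cast_le.mpr hmn)))
    intro u hu
    exact Set.mem_iUnion.mpr
      (exists_truncatedSecondMoment_pos (hρ u (ne_zero_of_mem_unit_sphere ⟨u, hu⟩)))
  obtain ⟨c, hc, hcR⟩ := (isCompact_sphere (0 : E) 1).exists_forall_le'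
    (continuous_truncatedSecondMoment _).continuousOn hR
  refine ⟨R, c, hc, fun u => ?_⟩
  rcases eq_or_ne u 0 with rfl | hu
  · simp [truncatedSecondMoment]
  have hv : ‖u‖⁻¹ • u ∈ sphere (0 : E) 1 := by
    simp [norm_smul, norm_ne_zero_iff.mpr hu]
  calc c * ‖u‖ ^ 2 ≤ truncatedSecondMoment ρ R (‖u‖⁻¹ • u) * ‖u‖ ^ 2 := by
        gcongr; exact hcR _ hv
    _ = truncatedSecondMoment ρ R u := by
        rw [truncatedSecondMoment_smul, inv_pow]
        field_simp

end FiniteMeasure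

variable [IsProbabilityMeasure ρ]

lemma two_div_pi_sq_mul_truncatedSecondMoment_le {R : ℝ} {t : E} (hR : ‖t‖ * R ≤ π) :
    2 / π ^ 2 * truncatedSecondMoment ρ R t ≤ 1 - (charFun ρ t).re := by
  have hcos : Integrable (fun x => cos ⟪x, t⟫) ρ :=
    (integrable_const 1).mono' (by fun_prop) (ae_of_all _ fun x => abs_cos_le_one _)
  calc 2 / π ^ 2 * truncatedSecondMoment ρ R t
      = ∫ x, 2 / π ^ 2 * (closedBall 0 R).indicator (fun x => ⟪t, x⟫ ^ 2) x ∂ρ := by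
        rw [truncatedSecondMoment, ← integral_indicator measurableSet_closedBall,
          integral_const_mul]
    _ ≤ ∫ x, (1 - cos ⟪x, t⟫) ∂ρ :=
        integral_mono (((integrableOn_closedBall_inner_sq R t).integrable_indicator
            measurableSet_closedBall).const_mul _) ((integrable_const _).sub hcos)
          (two_div_pi_sq_mul_indicator_le_one_sub_cos hR)
    _ = 1 - (charFun ρ t).re := by
        rw [integral_sub (integrable_const 1) hcos, integral_const, probReal_univ, one_smul,
          re_charFun]

lemma exists_mul_norm_sq_le_norm_one_sub_charFun
    (hρ : ∀ u : E, u ≠ 0 → ¬ ∀ᵐ x ∂ρ, ⟪u, x⟫ = 0) :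
    ∃ δ > 0, ∃ c > 0, ∀ t : E, ‖t‖ < δ → c * ‖t‖ ^ 2 ≤ ‖1 - charFun ρ t‖ := by
  obtain ⟨R, c, hc, hcR⟩ := exists_mul_norm_sq_le_truncatedSecondMoment hρ
  refine ⟨π / (R + 1), by positivity, 2 / π ^ 2 * c, by positivity, fun t ht => ?_⟩
  have hR : ‖t‖ * R ≤ π := by
    rw [lt_div_iff₀ (by positivity)] at ht
    nlinarith [norm_nonneg t]
  calc 2 / π ^ 2 * c * ‖t‖ ^ 2 ≤ 2 / π ^ 2 * truncatedSecondMoment ρ R t := by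
        rw [mul_assoc]; gcongr; exact hcR t
    _ ≤ 1 - (charFun ρ t).re := two_div_pi_sq_mul_truncatedSecondMoment_le hR
    _ = (1 - charFun ρ t).re := by simp
    _ ≤ ‖1 - charFun ρ t‖ := Complex.re_le_norm _

end SecondMoment

section SingularIntegral

variable {E : Type*} [NormedAddCommGroup E] [NormedSpace ℝ E] [FiniteDimensional ℝ E]
  [MeasurableSpace E] [BorelSpace E] (μ : Measure E) [μ.IsAddHaarMeasure]

lemma setLIntegral_ball_norm_rpow_neg_lt_top (hd : 1 ≤ finrank ℝ E) {α : ℝ}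
    (hα : α < finrank ℝ E) (r : ℝ) :
    ∫⁻ x in ball 0 r, ENNReal.ofReal (‖x‖ ^ (-α)) ∂μ < ⊤ :=
  Integrable.lintegral_lt_top <| integrableOn_ball_of_norm_le_rpow (C := 1) hd hα
    (ae_of_all _ fun x => by simp [abs_of_nonneg (rpow_nonneg (norm_nonneg x) _)])
    (measurable_norm.pow_const _).aestronglyMeasurable

lemma setLIntegral_ball_inv_sq_lt_top_of_mul_norm_sq_le (hd : 4 < finrank ℝ E) {f : E → ℝ}
    {c δ : ℝ} (hc : 0 < c) (hf : ∀ t ∈ ball (0 : E) δ, c * ‖t‖ ^ 2 ≤ f t) :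
    ∫⁻ t in ball 0 δ, (ENNReal.ofReal (f t ^ 2))⁻¹ ∂μ < ⊤ := by
  have : Nontrivial E := Module.nontrivial_of_finrank_pos (R := ℝ) (by omega)
  have hbound : ∀ᵐ t ∂μ.restrict (ball 0 δ),
      (ENNReal.ofReal (f t ^ 2))⁻¹ ≤ ENNReal.ofReal ((c ^ 2)⁻¹ * ‖t‖ ^ (-4 : ℝ)) := by
    filter_upwards [ae_restrict_mem measurableSet_ball,
      ae_restrict_of_ae (ae_iff.mpr (by simp) : ∀ᵐ t ∂μ, t ≠ 0)] with t ht ht0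
    have hlow : (c * ‖t‖ ^ 2) ^ 2 ≤ f t ^ 2 :=
      pow_le_pow_left₀ (by positivity) (hf t ht) 2
    have hpos : 0 < (c * ‖t‖ ^ 2) ^ 2 := by positivity
    have hrpow : (c ^ 2)⁻¹ * ‖t‖ ^ (-4 : ℝ) = ((c * ‖t‖ ^ 2) ^ 2)⁻¹ := by
      rw [rpow_neg (norm_nonneg t), rpow_ofNat]; ring
    rw [← ENNReal.ofReal_inv_of_pos (hpos.trans_le hlow), hrpow]
    exact ENNReal.ofReal_le_ofReal (inv_anti₀ hpos hlow)
  calc ∫⁻ t in ball 0 δ, (ENNReal.ofReal (f t ^ 2))⁻¹ ∂μ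
      ≤ ∫⁻ t in ball 0 δ, ENNReal.ofReal ((c ^ 2)⁻¹ * ‖t‖ ^ (-4 : ℝ)) ∂μ :=
        lintegral_mono_ae hbound
    _ < ⊤ := by
        simp_rw [ENNReal.ofReal_mul (inv_nonneg.mpr (sq_nonneg c))]
        rw [lintegral_const_mul' _ _ ENNReal.ofReal_ne_top]
        exact ENNReal.mul_lt_top ENNReal.ofReal_lt_top
          (setLIntegral_ball_norm_rpow_neg_lt_top μ (by omega) (by exact_mod_cast hd) δ)

end SingularIntegral

/-- For `d ≥ 5` and a probability measure `ρ` on `ℝ^d` giving mass `< 1`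
to every linear hyperplane, there is `δ > 0` with
`∫_{B_0^δ} |1 − ρ̂(t)|^{−2} dt < ∞` (Lebesgue measure). -/
theorem stmt5 (d : ℕ) (hd : 5 ≤ d)
    (ρ : Measure (EuclideanSpace ℝ (Fin d))) [IsProbabilityMeasure ρ]
    (hfull : ∀ u : EuclideanSpace ℝ (Fin d), u ≠ 0 →
      ρ {x | (inner ℝ u x : ℝ) = 0} < 1) :
    ∃ δ : ℝ, 0 < δ ∧
      (∫⁻ t in Metric.ball (0 : EuclideanSpace ℝ (Fin d)) δ,
        (ENNReal.ofReal
          (‖(1 : ℂ) - ∫ x, Complex.exp (Complex.I * ((inner ℝ t x : ℝ) : ℂ)) ∂ρ‖ ^ 2))⁻¹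
        ∂volume) < ⊤ := by
  have hρ : ∀ u : EuclideanSpace ℝ (Fin d), u ≠ 0 → ¬ ∀ᵐ x ∂ρ, ⟪u, x⟫ = 0 := fun u hu hae =>
    (hfull u hu).ne <| by
      rw [← measure_univ (μ := ρ), ← ae_iff_measure_eq
        (measurableSet_eq_fun (by fun_prop) measurable_const).nullMeasurableSet]
      exact hae
  have hcharFun : ∀ t : EuclideanSpace ℝ (Fin d),
      ∫ x, Complex.exp (Complex.I * ((inner ℝ t x : ℝ) : ℂ)) ∂ρ = charFun ρ t := fun t => by
    simp_rw [charFun_apply, real_inner_comm t, mul_comm Complex.I]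
  obtain ⟨δ, hδ, c, hc, hbound⟩ := exists_mul_norm_sq_le_norm_one_sub_charFun hρ
  refine ⟨δ, hδ, ?_⟩
  simp_rw [hcharFun]
  exact setLIntegral_ball_inv_sq_lt_top_of_mul_norm_sq_le volume
    (by rw [finrank_euclideanSpace_fin]; omega) hc fun t ht => hbound t (mem_ball_zero_iff.mp ht)
end

section
/- Let ρ be a probability measure on ℝ^d with characteristic function ρ̂(z) = ∫ exp(i⟨z,x⟩) dρ(x). Let U := Σ_{n=0}^∞ ρ^{*n} and U⁻ := Σ_{n=0}^∞ (ρ⁻)^{*n} be the expected occupation measures of the random walks with step distributions ρ and ρ⁻ := ρ(−·). Then for every r > 0 there exists a finite constant c' > 0 (depending only on d and r) such that (U * U⁻)(B_0^r) ≤ c' · sup_{0 ≤ s < 1} ∫_{B_0^{√d / r}} |1 − s·ρ̂(z)|^{−2} dz, where the integral is with respect to Lebesgue measure on ℝ^d. -/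
/-!
The triangle function `triangle a u = max (a - |u|) 0` has the nonnegative Fourier transform
`fejer a t = 2 (1 - cos (a t)) / t²`, which is at least `(4 / π²) a²` when `|a t| ≤ 1`.
Taking coordinatewise products on `ℝ^d` with `a = 1 / r`, `fejerProd a` is nonnegative, bounded
below on `B_0^r`, and the Fourier transform of `triangleProd a ≤ a ^ d`, which vanishes outside
`B_0^{√d a}`. Hence, by Fubini, for every finite measure `M`,
`M (B_0^r) ≲ ∫ fejerProd a dM = ∫ triangleProd a · M̂ ≲ ∫_{B_0^{√d / r}} M̂`.

For `0 ≤ s < 1` the discounted occupation measure `G_s = Σ sⁿ ρ^{*n}` is finite with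
characteristic function `(1 - s ρ̂)⁻¹`, and that of the reflected walk is its conjugate, so
`M = G_s * G_s⁻` has `M̂ = |1 - s ρ̂|⁻²`. Finally `U * U⁻` is the increasing limit of
`G_s * G_s⁻` as `s ↑ 1`.
-/

open MeasureTheory

/-- Convolution of two measures on `ℝ^d`: the pushforward of the product measure
under addition. -/
noncomputable def mconv {d : ℕ} (μ ν : Measure (EuclideanSpace ℝ (Fin d))) :
    Measure (EuclideanSpace ℝ (Fin d)) :=
  Measure.map (fun p => p.1 + p.2) (μ.prod ν)

/-- Convolution powers: `ρ^{*0} = δ_0`, `ρ^{*(n+1)} = ρ^{*n} * ρ`. -/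
noncomputable def convPow {d : ℕ} (ρ : Measure (EuclideanSpace ℝ (Fin d))) :
    ℕ → Measure (EuclideanSpace ℝ (Fin d))
  | 0 => Measure.dirac 0
  | n + 1 => mconv (convPow ρ n) ρ

/-- Expected occupation measure `U = Σ_{n≥0} ρ^{*n}` of the random walk with step
distribution `ρ`. -/
noncomputable def occMeasure {d : ℕ} (ρ : Measure (EuclideanSpace ℝ (Fin d))) :
    Measure (EuclideanSpace ℝ (Fin d)) :=
  Measure.sum (fun n => convPow ρ n)

/-- Reflected measure `ρ⁻ = ρ(−·)`. -/
noncomputable def mrefl {d : ℕ} (ρ : Measure (EuclideanSpace ℝ (Fin d))) :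
    Measure (EuclideanSpace ℝ (Fin d)) :=
  Measure.map (fun x => -x) ρ

open Complex
open scoped ComplexConjugate RealInnerProductSpace

noncomputable def triangle (a u : ℝ) : ℝ := max (a - |u|) 0

noncomputable def fejer (a t : ℝ) : ℝ :=
  if t = 0 then a ^ 2 else 2 * (1 - Real.cos (a * t)) / t ^ 2

section Triangle

variable {a : ℝ}

lemma triangle_nonneg (a u : ℝ) : 0 ≤ triangle a u := le_max_right _ _

lemma triangle_le (ha : 0 ≤ a) (u : ℝ) : triangle a u ≤ a :=
  max_le (by linarith [abs_nonneg u]) ha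

lemma triangle_eq_zero {u : ℝ} (h : a ≤ |u|) : triangle a u = 0 :=
  max_eq_right (by linarith)

lemma triangle_neg (a u : ℝ) : triangle a (-u) = triangle a u := by
  rw [triangle, abs_neg, triangle]

@[fun_prop]
lemma continuous_triangle (a : ℝ) : Continuous (triangle a) := by
  unfold triangle; fun_prop

lemma hasCompactSupport_triangle (a : ℝ) : HasCompactSupport (triangle a) :=
  HasCompactSupport.intro (isCompact_Icc (a := -a) (b := a)) fun u hu =>
    triangle_eq_zero (not_le.1 (by rwa [Set.mem_Icc, ← abs_le] at hu)).le

lemma intervalIntegral_sub_mul_cos (a t : ℝ) :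
    ∫ u in (0:ℝ)..a, (a - u) * Real.cos (t * u) = fejer a t / 2 := by
  rcases eq_or_ne t 0 with rfl | ht
  · rw [fejer, if_pos rfl]
    simp only [zero_mul, Real.cos_zero, mul_one]
    rw [intervalIntegral.integral_sub intervalIntegrable_const
      intervalIntegral.intervalIntegrable_id, intervalIntegral.integral_const, integral_id]
    simp only [sub_zero, smul_eq_mul]
    ring
  have hderiv : ∀ u ∈ Set.uIcc 0 a, HasDerivAt
      (fun u => (a - u) * Real.sin (t * u) / t - Real.cos (t * u) / t ^ 2)
      ((a - u) * Real.cos (t * u)) u := by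
    intro u _
    have hlin := (hasDerivAt_id' u).const_mul t
    refine ((((hasDerivAt_id' u).const_sub a).mul hlin.sin).div_const t |>.sub
      (hlin.cos.div_const (t ^ 2))).congr_deriv ?_
    field_simp
    ring
  rw [intervalIntegral.integral_eq_sub_of_hasDerivAt hderiv
    ((by fun_prop : Continuous fun u => (a - u) * Real.cos (t * u)).intervalIntegrable _ _),
    fejer, if_neg ht]
  simp only [sub_self, zero_mul, mul_zero, Real.sin_zero, Real.cos_zero]
  field_simp
  ring

lemma integral_triangle_mul_cos (ha : 0 ≤ a) (t : ℝ) :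
    ∫ u, triangle a u * Real.cos (t * u) = 2 * ∫ u in (0:ℝ)..a, (a - u) * Real.cos (t * u) := by
  have heven : ∀ u, triangle a u * Real.cos (t * u) = max (a - |u|) 0 * Real.cos (t * |u|) := by
    intro u
    rcases abs_choice u with h | h <;> simp [triangle, h]
  simp_rw [heven]
  rw [integral_comp_abs (f := fun v => max (a - v) 0 * Real.cos (t * v)),
    intervalIntegral.integral_of_le ha]
  congr 1
  rw [setIntegral_eq_of_subset_of_forall_sdiff_eq_zero measurableSet_Ioi Set.Ioc_subset_Ioi_self]
  · refine setIntegral_congr_fun measurableSet_Ioc fun v hv => ?_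
    rw [max_eq_left (by linarith [hv.2])]
  · intro v hv
    simp only [Set.mem_sdiff, Set.mem_Ioi, Set.mem_Ioc, not_and, not_le] at hv
    rw [max_eq_right (by linarith [hv.2 hv.1]), zero_mul]

lemma integrable_triangle (a : ℝ) : Integrable (triangle a) :=
  (continuous_triangle a).integrable_of_hasCompactSupport (hasCompactSupport_triangle a)

lemma integral_triangle_mul_cexp (ha : 0 ≤ a) (t : ℝ) :
    ∫ u, (triangle a u : ℂ) * cexp (↑(t * u) * I) = fejer a t := by
  have hint : Integrable fun u => (triangle a u : ℂ) * cexp (↑(t * u) * I) :=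
    (integrable_triangle a).ofReal.mul_bdd (c := 1)
      (by fun_prop : Continuous fun u : ℝ => cexp (↑(t * u) * I)).aestronglyMeasurable
      (.of_forall fun u => (norm_exp_ofReal_mul_I _).le)
  have hconj : conj (∫ u, (triangle a u : ℂ) * cexp (↑(t * u) * I)) =
      ∫ u, (triangle a u : ℂ) * cexp (↑(t * u) * I) := by
    rw [← integral_conj, ← integral_neg_eq_self]
    congr 1 with u
    simp [triangle_neg, ← exp_conj]
  rw [← conj_eq_iff_re.mp hconj, ← RCLike.re_to_complex, ← integral_re hint]
  simp only [RCLike.re_to_complex, re_ofReal_mul, exp_ofReal_mul_I_re]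
  rw [integral_triangle_mul_cos ha, intervalIntegral_sub_mul_cos]
  push_cast; ring

lemma fejer_nonneg (a t : ℝ) : 0 ≤ fejer a t := by
  unfold fejer
  split_ifs
  · positivity
  · have := Real.cos_le_one (a * t)
    positivity

lemma fejer_le (a t : ℝ) : fejer a t ≤ a ^ 2 := by
  unfold fejer
  split_ifs with ht
  · rfl
  · have := Real.one_sub_sq_div_two_le_cos (x := a * t)
    rw [div_le_iff₀ (by positivity)]
    nlinarith

lemma fejer_ge {t : ℝ} (h : |a * t| ≤ 1) : 4 / Real.pi ^ 2 * a ^ 2 ≤ fejer a t := by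
  have hpi : 3 < Real.pi := Real.pi_gt_three
  unfold fejer
  split_ifs with ht
  · rw [div_mul_eq_mul_div, div_le_iff₀ (by positivity)]
    nlinarith [mul_le_mul_of_nonneg_left (by nlinarith : (4:ℝ) ≤ Real.pi ^ 2) (sq_nonneg a)]
  · have := Real.cos_le_one_sub_mul_cos_sq (x := a * t) (by linarith)
    rw [le_div_iff₀ (by positivity)]
    linarith [show 4 / Real.pi ^ 2 * a ^ 2 * t ^ 2 = 2 * (2 / Real.pi ^ 2 * (a * t) ^ 2) by ring]

@[fun_prop]
lemma measurable_fejer (a : ℝ) : Measurable (fejer a) :=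
  Measurable.ite (measurableSet_singleton 0) measurable_const (by fun_prop)

end Triangle

section Product

variable {ι : Type*} [Fintype ι] {a : ℝ}

noncomputable def triangleProd (a : ℝ) (z : EuclideanSpace ℝ ι) : ℝ := ∏ j, triangle a (z j)

noncomputable def fejerProd (a : ℝ) (x : EuclideanSpace ℝ ι) : ℝ := ∏ j, fejer a (x j)

lemma triangleProd_nonneg (a : ℝ) (z : EuclideanSpace ℝ ι) : 0 ≤ triangleProd a z :=
  Finset.prod_nonneg fun j _ => triangle_nonneg a (z j)

lemma triangleProd_le (ha : 0 ≤ a) (z : EuclideanSpace ℝ ι) :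
    triangleProd a z ≤ a ^ Fintype.card ι :=
  (Finset.prod_le_prod (fun j _ => triangle_nonneg a (z j))
    fun j _ => triangle_le ha (z j)).trans_eq (by simp)

lemma norm_lt_sqrt_card_mul_of_abs_lt [Nonempty ι] {z : EuclideanSpace ℝ ι} (h : ∀ j, |z j| < a) :
    ‖z‖ < √(Fintype.card ι) * a := by
  have ha : 0 < a := (abs_nonneg _).trans_lt (h (Classical.arbitrary ι))
  rw [EuclideanSpace.norm_eq, ← Real.sqrt_sq ha.le, ← Real.sqrt_mul (Nat.cast_nonneg _)]
  refine Real.sqrt_lt_sqrt (by positivity) ?_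
  calc ∑ j, ‖z j‖ ^ 2 < ∑ _j : ι, a ^ 2 :=
        Finset.sum_lt_sum_of_nonempty Finset.univ_nonempty fun j _ => by
          rw [Real.norm_eq_abs]; gcongr; exact h j
    _ = Fintype.card ι * a ^ 2 := by simp

lemma triangleProd_eq_zero [Nonempty ι] {z : EuclideanSpace ℝ ι}
    (h : √(Fintype.card ι) * a ≤ ‖z‖) : triangleProd a z = 0 := by
  obtain ⟨j, hj⟩ : ∃ j, a ≤ |z j| := by
    by_contra! hz
    exact (norm_lt_sqrt_card_mul_of_abs_lt hz).not_ge h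
  exact Finset.prod_eq_zero (Finset.mem_univ j) (triangle_eq_zero hj)

@[fun_prop]
lemma continuous_triangleProd (a : ℝ) : Continuous (triangleProd (ι := ι) a) := by
  unfold triangleProd; fun_prop

lemma integrable_triangleProd [Nonempty ι] (a : ℝ) : Integrable (triangleProd (ι := ι) a) :=
  (continuous_triangleProd a).integrable_of_hasCompactSupport <|
    HasCompactSupport.intro (isCompact_closedBall 0 (√(Fintype.card ι) * a)) fun z hz =>
      triangleProd_eq_zero (by simpa using (not_le.1 (by simpa using hz)).le)

lemma fejerProd_nonneg (a : ℝ) (x : EuclideanSpace ℝ ι) : 0 ≤ fejerProd a x :=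
  Finset.prod_nonneg fun j _ => fejer_nonneg a (x j)

lemma fejerProd_le (a : ℝ) (x : EuclideanSpace ℝ ι) : fejerProd a x ≤ (a ^ 2) ^ Fintype.card ι :=
  (Finset.prod_le_prod (fun j _ => fejer_nonneg a (x j)) fun j _ => fejer_le a (x j)).trans_eq
    (by simp)

lemma fejerProd_ge {x : EuclideanSpace ℝ ι} (h : ∀ j, |a * x j| ≤ 1) :
    (4 / Real.pi ^ 2 * a ^ 2) ^ Fintype.card ι ≤ fejerProd a x :=
  (Finset.prod_le_prod (fun _ _ => by positivity) fun j _ => fejer_ge (h j)).trans_eq' (by simp)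

@[fun_prop]
lemma measurable_fejerProd (a : ℝ) : Measurable (fejerProd (ι := ι) a) := by
  unfold fejerProd; fun_prop

lemma integral_triangleProd_mul_cexp (ha : 0 ≤ a) (x : EuclideanSpace ℝ ι) :
    ∫ z, (triangleProd a z : ℂ) * cexp (↑⟪x, z⟫ * I) = fejerProd a x := by
  rw [← (EuclideanSpace.volume_preserving_symm_measurableEquiv_toLp ι).symm.integral_comp']
  have hprod : ∀ y : ι → ℝ,
      (triangleProd a ((MeasurableEquiv.toLp 2 (ι → ℝ)).symm.symm y) : ℂ) *
        cexp (↑⟪x, (MeasurableEquiv.toLp 2 (ι → ℝ)).symm.symm y⟫ * I) =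
      ∏ j, (triangle a (y j) : ℂ) * cexp (↑(x j * y j) * I) := by
    intro y
    rw [Finset.prod_mul_distrib, ← Complex.exp_sum, triangleProd, Complex.ofReal_prod,
      ← Finset.sum_mul]
    push_cast
    simp [PiLp.inner_apply, mul_comm]
  simp_rw [hprod]
  rw [integral_fintype_prod_volume_eq_prod fun j u => (triangle a u : ℂ) * cexp (↑(x j * u) * I)]
  rw [fejerProd, Complex.ofReal_prod]
  exact Finset.prod_congr rfl fun j _ => integral_triangle_mul_cexp ha (x j)

end Product

section Fourier

variable {ι : Type*} [Fintype ι] [Nonempty ι] {a : ℝ}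

lemma integral_fejerProd_eq_integral_mul_charFun (ha : 0 ≤ a)
    (M : Measure (EuclideanSpace ℝ ι)) [IsFiniteMeasure M] :
    ∫ x, (fejerProd a x : ℂ) ∂M = ∫ z, (triangleProd a z : ℂ) * charFun M z := by
  have hint : Integrable (Function.uncurry fun (x z : EuclideanSpace ℝ ι) =>
      (triangleProd a z : ℂ) * cexp (↑⟪x, z⟫ * I)) (M.prod volume) :=
    (((integrable_triangleProd a).ofReal (𝕜 := ℂ)).comp_snd M).mul_bdd (c := 1) (by fun_prop)
      (.of_forall fun p => (norm_exp_ofReal_mul_I _).le)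
  simp_rw [← integral_triangleProd_mul_cexp ha, charFun_apply, ← integral_const_mul]
  exact integral_integral_swap hint

lemma lintegral_fejerProd_eq_lintegral_triangleProd_mul (ha : 0 ≤ a)
    (M : Measure (EuclideanSpace ℝ ι)) [IsFiniteMeasure M] {w : EuclideanSpace ℝ ι → ℝ} (hw : ∀ z, charFun M z = w z) (hw0 : ∀ z, 0 ≤ w z) :
    ∫⁻ x, ENNReal.ofReal (fejerProd a x) ∂M =
      ∫⁻ z, ENNReal.ofReal (triangleProd a z * w z) := by
  have hφ : Integrable (fejerProd a) M :=
    (integrable_const ((a ^ 2) ^ Fintype.card ι)).mono' (by fun_prop)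
      (.of_forall fun x => by
        rw [Real.norm_of_nonneg (fejerProd_nonneg a x)]; exact fejerProd_le a x)
  have hw_re : w = fun z => (charFun M z).re := funext fun z => by simp [hw]
  have hgw : Integrable fun z => triangleProd a z * w z :=
    (integrable_triangleProd a).mul_bdd (c := M.real Set.univ)
      (by rw [hw_re]; fun_prop)
      (.of_forall fun z => by
        rw [← Complex.norm_real, ← hw]; exact norm_charFun_le z)
  have heq : ∫ x, fejerProd a x ∂M = ∫ z, triangleProd a z * w z := by
    have := integral_fejerProd_eq_integral_mul_charFun ha M
    simp_rw [hw, ← Complex.ofReal_mul, integral_complex_ofReal] at this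
    exact_mod_cast this
  rw [← ofReal_integral_eq_lintegral_ofReal hφ (.of_forall (fejerProd_nonneg a)),
    ← ofReal_integral_eq_lintegral_ofReal hgw
      (.of_forall fun z => mul_nonneg (triangleProd_nonneg a z) (hw0 z)), heq]

omit [Nonempty ι] in

lemma measure_ball_le_lintegral_fejerProd (M : Measure (EuclideanSpace ℝ ι)) {r : ℝ}
    (hr : 0 < r) :
    M (Metric.ball 0 r) ≤ ENNReal.ofReal (((Real.pi * r / 2) ^ 2) ^ Fintype.card ι) *
      ∫⁻ x, ENNReal.ofReal (fejerProd r⁻¹ x) ∂M := by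
  set c := ((Real.pi * r / 2) ^ 2) ^ Fintype.card ι
  have hc : 0 ≤ c := by positivity
  have hpoint : ∀ x, (Metric.ball (0 : EuclideanSpace ℝ ι) r).indicator 1 x ≤
      ENNReal.ofReal (c * fejerProd r⁻¹ x) := by
    intro x
    by_cases hx : x ∈ Metric.ball (0 : EuclideanSpace ℝ ι) r
    · rw [Set.indicator_of_mem hx, Pi.one_apply, ENNReal.one_le_ofReal]
      rw [mem_ball_zero_iff] at hx
      have hcoord : ∀ j, |r⁻¹ * x j| ≤ 1 := fun j => by
        rw [abs_mul, abs_inv, abs_of_pos hr, inv_mul_le_one₀ hr]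
        exact (PiLp.norm_apply_le x j).trans hx.le
      calc 1 = c * (4 / Real.pi ^ 2 * r⁻¹ ^ 2) ^ Fintype.card ι := by
            rw [← mul_pow]; field_simp; ring
        _ ≤ c * fejerProd r⁻¹ x := by gcongr; exact fejerProd_ge hcoord
    · rw [Set.indicator_of_notMem hx]; exact zero_le
  calc M (Metric.ball 0 r) = ∫⁻ x, (Metric.ball (0 : EuclideanSpace ℝ ι) r).indicator 1 x ∂M :=
        (lintegral_indicator_one measurableSet_ball).symm
    _ ≤ ∫⁻ x, ENNReal.ofReal (c * fejerProd r⁻¹ x) ∂M := lintegral_mono hpoint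
    _ = ENNReal.ofReal c * ∫⁻ x, ENNReal.ofReal (fejerProd r⁻¹ x) ∂M := by
        simp_rw [ENNReal.ofReal_mul hc]
        exact lintegral_const_mul' _ _ ENNReal.ofReal_ne_top

lemma lintegral_triangleProd_mul_le (ha : 0 ≤ a)
    (w : EuclideanSpace ℝ ι → ℝ) :
    ∫⁻ z, ENNReal.ofReal (triangleProd a z * w z) ≤
      ENNReal.ofReal (a ^ Fintype.card ι) *
        ∫⁻ z in Metric.ball 0 (√(Fintype.card ι) * a), ENNReal.ofReal (w z) := by
  calc ∫⁻ z, ENNReal.ofReal (triangleProd a z * w z)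
      = ∫⁻ z in Metric.ball 0 (√(Fintype.card ι) * a),
          ENNReal.ofReal (triangleProd a z * w z) := by
        rw [← lintegral_indicator measurableSet_ball]
        congr 1 with z
        by_cases hz : z ∈ Metric.ball (0 : EuclideanSpace ℝ ι) (√(Fintype.card ι) * a)
        · rw [Set.indicator_of_mem hz]
        · rw [Set.indicator_of_notMem hz,
            triangleProd_eq_zero (by simpa using hz), zero_mul, ENNReal.ofReal_zero]
    _ ≤ ∫⁻ z in Metric.ball 0 (√(Fintype.card ι) * a),
          ENNReal.ofReal (a ^ Fintype.card ι) * ENNReal.ofReal (w z) := by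
        refine lintegral_mono fun z => ?_
        rw [ENNReal.ofReal_mul (triangleProd_nonneg a z)]
        gcongr
        exact triangleProd_le ha z
    _ = _ := lintegral_const_mul' _ _ ENNReal.ofReal_ne_top

end Fourier

lemma ENNReal.tsum_iSup_of_monotone {α ι : Type*} [Preorder ι] [IsDirectedOrder ι]
    {f : α → ι → ENNReal} (hf : ∀ a, Monotone (f a)) :
    ∑' a, ⨆ i, f a i = ⨆ i, ∑' a, f a i := by
  simp_rw [ENNReal.tsum_eq_iSup_sum, ENNReal.finsetSum_iSup_of_monotone hf]
  exact iSup_comm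

lemma iSup_ofReal_pow_Ico (n : ℕ) :
    ⨆ s : Set.Ico (0 : ℝ) 1, ENNReal.ofReal ((s : ℝ) ^ n) = 1 := by
  refine le_antisymm (iSup_le fun s => ENNReal.ofReal_le_one.2 (pow_le_one₀ s.2.1 s.2.2.le)) ?_
  have hlim : Filter.Tendsto (fun s : ℝ => ENNReal.ofReal (s ^ n)) (nhdsWithin 1 (Set.Iio 1))
      (nhds 1) := by
    simpa [Function.comp_def] using
      ((ENNReal.continuous_ofReal.comp (continuous_pow n)).tendsto 1).mono_left nhdsWithin_le_nhds
  refine le_of_tendsto hlim ?_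
  filter_upwards [Ioo_mem_nhdsLT (zero_lt_one' ℝ)] with s hs
  exact le_iSup (fun s : Set.Ico (0 : ℝ) 1 => ENNReal.ofReal ((s : ℝ) ^ n)) ⟨s, hs.1.le, hs.2⟩

lemma MeasureTheory.Measure.sum_conv_sum {G : Type*} [AddMonoid G] [MeasurableSpace G]
    [MeasurableAdd₂ G] {ι κ : Type*} [Countable κ] (μ : ι → Measure G) (ν : κ → Measure G) [∀ j, SFinite (ν j)] :
    Measure.sum μ ∗ Measure.sum ν = Measure.sum fun p : ι × κ => μ p.1 ∗ ν p.2 := by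
  rw [Measure.conv, Measure.prod_sum, Measure.map_sum (by fun_prop)]
  rfl

section Occupation

variable {d : ℕ}

lemma mconv_eq_conv (μ ν : Measure (EuclideanSpace ℝ (Fin d))) : mconv μ ν = μ ∗ ν := rfl

instance (ρ : Measure (EuclideanSpace ℝ (Fin d))) [IsProbabilityMeasure ρ] (n : ℕ) :
    IsProbabilityMeasure (convPow ρ n) := by
  induction n with
  | zero => rw [convPow]; infer_instance
  | succ n ih => rw [convPow, mconv_eq_conv]; infer_instance

instance (ρ : Measure (EuclideanSpace ℝ (Fin d))) [SFinite ρ] (n : ℕ) :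
    SFinite (convPow ρ n) := by
  induction n with
  | zero => rw [convPow]; infer_instance
  | succ n ih => rw [convPow, mconv_eq_conv]; infer_instance

instance (ρ : Measure (EuclideanSpace ℝ (Fin d))) [IsProbabilityMeasure ρ] :
    IsProbabilityMeasure (mrefl ρ) :=
  Measure.isProbabilityMeasure_map measurable_neg.aemeasurable

lemma charFun_convPow (ρ : Measure (EuclideanSpace ℝ (Fin d))) [IsProbabilityMeasure ρ] (n : ℕ)
    (t : EuclideanSpace ℝ (Fin d)) : charFun (convPow ρ n) t = charFun ρ t ^ n := by
  induction n with
  | zero => simp [convPow, charFun_dirac]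
  | succ n ih => rw [convPow, mconv_eq_conv, charFun_conv, ih, pow_succ]

lemma charFun_mrefl (ρ : Measure (EuclideanSpace ℝ (Fin d))) (t : EuclideanSpace ℝ (Fin d)) :
    charFun (mrefl ρ) t = conj (charFun ρ t) := by
  rw [← charFun_neg, mrefl, charFun_apply, charFun_apply,
    integral_map measurable_neg.aemeasurable (by fun_prop)]
  simp [inner_neg_left, inner_neg_right]

noncomputable def discountedOccMeasure (ρ : Measure (EuclideanSpace ℝ (Fin d))) (s : ℝ) :
    Measure (EuclideanSpace ℝ (Fin d)) :=
  Measure.sum fun n => ENNReal.ofReal (s ^ n) • convPow ρ n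

lemma mconv_occMeasure_apply_eq_iSup (ρ ρ' : Measure (EuclideanSpace ℝ (Fin d))) [SFinite ρ']
    {A : Set (EuclideanSpace ℝ (Fin d))} (hA : MeasurableSet A) :
    mconv (occMeasure ρ) (occMeasure ρ') A =
      ⨆ s : Set.Ico (0 : ℝ) 1,
        mconv (discountedOccMeasure ρ s) (discountedOccMeasure ρ' s) A := by
  simp_rw [occMeasure, discountedOccMeasure, mconv_eq_conv, Measure.sum_conv_sum,
    Measure.sum_apply _ hA, Measure.conv_smul_left, Measure.conv_smul_right, Measure.smul_apply,
    smul_eq_mul]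
  rw [← ENNReal.tsum_iSup_of_monotone]
  · congr 1 with p
    have hpow : ∀ s : Set.Ico (0 : ℝ) 1, ENNReal.ofReal ((s : ℝ) ^ p.1) *
        (ENNReal.ofReal ((s : ℝ) ^ p.2) * (convPow ρ p.1 ∗ convPow ρ' p.2) A) =
        ENNReal.ofReal ((s : ℝ) ^ (p.1 + p.2)) * (convPow ρ p.1 ∗ convPow ρ' p.2) A := fun s => by
      rw [← mul_assoc, ← ENNReal.ofReal_mul (pow_nonneg s.2.1 _), pow_add]
    simp_rw [hpow, ← ENNReal.iSup_mul, iSup_ofReal_pow_Ico, one_mul]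
  · intro p s s' hss'
    dsimp only
    gcongr ENNReal.ofReal ?_ * (ENNReal.ofReal ?_ * _) <;> exact pow_le_pow_left₀ s.2.1 hss' _

variable (ρ : Measure (EuclideanSpace ℝ (Fin d))) [IsProbabilityMeasure ρ] {s : ℝ}

lemma isFiniteMeasure_discountedOccMeasure (hs0 : 0 ≤ s) (hs1 : s < 1) :
    IsFiniteMeasure (discountedOccMeasure ρ s) := by
  constructor
  simp_rw [discountedOccMeasure, Measure.sum_apply _ MeasurableSet.univ, Measure.smul_apply,
    measure_univ, smul_eq_mul, mul_one, ENNReal.ofReal_pow hs0, ENNReal.tsum_geometric]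
  simpa using hs1

lemma norm_mul_charFun_le (hs0 : 0 ≤ s) (t : EuclideanSpace ℝ (Fin d)) :
    ‖(s : ℂ) * charFun ρ t‖ ≤ s := by
  rw [norm_mul, Complex.norm_real, Real.norm_of_nonneg hs0]
  exact mul_le_of_le_one_right hs0 (norm_charFun_le_one t)

lemma charFun_discountedOccMeasure (hs0 : 0 ≤ s) (hs1 : s < 1) (t : EuclideanSpace ℝ (Fin d)) :
    charFun (discountedOccMeasure ρ s) t = (1 - s * charFun ρ t)⁻¹ := by
  have := isFiniteMeasure_discountedOccMeasure ρ hs0 hs1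
  have hint : Integrable (fun x => cexp (↑⟪x, t⟫ * I)) (discountedOccMeasure ρ s) :=
    (integrable_const (1 : ℝ)).mono' (by fun_prop)
      (.of_forall fun x => (norm_exp_ofReal_mul_I _).le)
  rw [charFun_apply, discountedOccMeasure, integral_sum_measure hint]
  simp_rw [integral_smul_measure, ← charFun_apply, charFun_convPow,
    ENNReal.toReal_ofReal (pow_nonneg hs0 _), Complex.real_smul, Complex.ofReal_pow, ← mul_pow]
  exact tsum_geometric_of_norm_lt_one ((norm_mul_charFun_le ρ hs0 t).trans_lt hs1)

lemma sub_le_norm_one_sub_mul_charFun (hs0 : 0 ≤ s) (t : EuclideanSpace ℝ (Fin d)) :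
    1 - s ≤ ‖1 - s * charFun ρ t‖ := by
  calc 1 - s ≤ ‖(1 : ℂ)‖ - ‖(s : ℂ) * charFun ρ t‖ := by
        rw [norm_one]; linarith [norm_mul_charFun_le ρ hs0 t]
    _ ≤ _ := norm_sub_norm_le _ _

lemma charFun_conv_discountedOccMeasure_mrefl (hs0 : 0 ≤ s) (hs1 : s < 1)
    (t : EuclideanSpace ℝ (Fin d)) :
    charFun (discountedOccMeasure ρ s ∗ discountedOccMeasure (mrefl ρ) s) t =
      ((‖1 - s * charFun ρ t‖ ^ 2)⁻¹ : ℝ) := by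
  have := isFiniteMeasure_discountedOccMeasure ρ hs0 hs1
  have := isFiniteMeasure_discountedOccMeasure (mrefl ρ) hs0 hs1
  rw [charFun_conv, charFun_discountedOccMeasure ρ hs0 hs1,
    charFun_discountedOccMeasure (mrefl ρ) hs0 hs1, charFun_mrefl, ← mul_inv]
  have hconj : 1 - (s : ℂ) * conj (charFun ρ t) = conj (1 - s * charFun ρ t) := by simp
  rw [hconj, mul_conj, normSq_eq_norm_sq]
  push_cast; rfl

lemma mconv_discountedOccMeasure_ball_le (hd : 1 ≤ d) {r : ℝ} (hr : 0 < r) (hs0 : 0 ≤ s)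
    (hs1 : s < 1) :
    mconv (discountedOccMeasure ρ s) (discountedOccMeasure (mrefl ρ) s) (Metric.ball 0 r) ≤
      ENNReal.ofReal ((Real.pi ^ 2 * r / 4) ^ d) *
        ∫⁻ z in Metric.ball 0 (√d / r), (ENNReal.ofReal (‖1 - s * charFun ρ z‖ ^ 2))⁻¹ := by
  have : Nonempty (Fin d) := ⟨⟨0, hd⟩⟩
  have := isFiniteMeasure_discountedOccMeasure ρ hs0 hs1
  have := isFiniteMeasure_discountedOccMeasure (mrefl ρ) hs0 hs1
  have hw_inv : ∀ z, ENNReal.ofReal (‖1 - s * charFun ρ z‖ ^ 2)⁻¹ =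
      (ENNReal.ofReal (‖1 - s * charFun ρ z‖ ^ 2))⁻¹ := fun z =>
    ENNReal.ofReal_inv_of_pos (pow_pos ((sub_pos.2 hs1).trans_le
      (sub_le_norm_one_sub_mul_charFun ρ hs0 z)) 2)
  calc mconv (discountedOccMeasure ρ s) (discountedOccMeasure (mrefl ρ) s) (Metric.ball 0 r)
      ≤ ENNReal.ofReal (((Real.pi * r / 2) ^ 2) ^ Fintype.card (Fin d)) *
          ∫⁻ x, ENNReal.ofReal (fejerProd r⁻¹ x)
            ∂(discountedOccMeasure ρ s ∗ discountedOccMeasure (mrefl ρ) s) :=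
        measure_ball_le_lintegral_fejerProd _ hr
    _ = ENNReal.ofReal (((Real.pi * r / 2) ^ 2) ^ Fintype.card (Fin d)) *
          ∫⁻ z, ENNReal.ofReal (triangleProd r⁻¹ z * (‖1 - s * charFun ρ z‖ ^ 2)⁻¹) := by
        rw [lintegral_fejerProd_eq_lintegral_triangleProd_mul (by positivity) _
          (charFun_conv_discountedOccMeasure_mrefl ρ hs0 hs1) fun z => by positivity]
    _ ≤ ENNReal.ofReal (((Real.pi * r / 2) ^ 2) ^ Fintype.card (Fin d)) *
          (ENNReal.ofReal (r⁻¹ ^ Fintype.card (Fin d)) *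
            ∫⁻ z in Metric.ball 0 (√(Fintype.card (Fin d)) * r⁻¹),
              ENNReal.ofReal (‖1 - s * charFun ρ z‖ ^ 2)⁻¹) := by
        gcongr; exact lintegral_triangleProd_mul_le (by positivity) _
    _ = _ := by
        rw [← mul_assoc, ← ENNReal.ofReal_mul (by positivity)]
        simp_rw [hw_inv, Fintype.card_fin, ← mul_pow, div_eq_mul_inv]
        congr 3
        field_simp
        ring

end Occupation

lemma integral_cexp_I_mul_inner_eq_charFun {E : Type*} [NormedAddCommGroup E]
    [InnerProductSpace ℝ E] [MeasurableSpace E] (μ : Measure E) (z : E) :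
    ∫ x, cexp (I * ⟪z, x⟫) ∂μ = charFun μ z := by
  simp_rw [charFun_apply, real_inner_comm z, mul_comm I]

/-- For every `r > 0` there is a finite constant `c' > 0` (depending only
on `d` and `r`) with
`(U * U⁻)(B_0^r) ≤ c' · sup_{0 ≤ s < 1} ∫_{B_0^{√d/r}} |1 − s ρ̂(z)|^{−2} dz`. -/
theorem stmt7 (d : ℕ) (hd : 1 ≤ d)
    (ρ : Measure (EuclideanSpace ℝ (Fin d))) [IsProbabilityMeasure ρ]
    (r : ℝ) (hr : 0 < r) :
    ∃ c' : ℝ, 0 < c' ∧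
      mconv (occMeasure ρ) (occMeasure (mrefl ρ)) (Metric.ball 0 r) ≤
        ENNReal.ofReal c' *
          ⨆ s : Set.Ico (0 : ℝ) 1,
            ∫⁻ z in Metric.ball (0 : EuclideanSpace ℝ (Fin d)) (Real.sqrt d / r),
              (ENNReal.ofReal
                (‖(1 : ℂ) - ((s : ℝ) : ℂ) *
                    ∫ x, Complex.exp (Complex.I * ((inner ℝ z x : ℝ) : ℂ)) ∂ρ‖ ^ 2))⁻¹
              ∂volume := by
  refine ⟨(Real.pi ^ 2 * r / 4) ^ d, by positivity, ?_⟩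
  simp_rw [integral_cexp_I_mul_inner_eq_charFun]
  rw [mconv_occMeasure_apply_eq_iSup _ _ measurableSet_ball, ENNReal.mul_iSup]
  exact iSup_mono fun s => mconv_discountedOccMeasure_ball_le ρ hd hr s.2.1 s.2.2
end

section
/- Let ρ be a probability measure on ℝ^d, and let U := Σ_{n=0}^∞ ρ^{*n} and U⁻ := Σ_{n=0}^∞ (ρ⁻)^{*n} with ρ⁻ := ρ(−·). Then for every x ∈ ℝ^d and every r > 0: (U * U⁻)(B_x^r) ≤ (U * U⁻)(B_0^{2r}), where B_x^r is the open Euclidean ball of radius r centered at x (each side may be infinite). -/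
open MeasureTheory

/-!
Reflection commutes with convolution, so `U⁻` is the reflection of `μ := U`, and then
`(μ * μ⁻)(B_x^r) = ∫ c dμ` with `c a = μ(B_{a-x}^r)`, while `(μ * μ⁻)(B_0^{2r}) = ∫ m dμ` with
`m a = μ(B_a^{2r})`. By AM-GM, `2c ≤ m + c²/m`, so it suffices that `∫ c²/m dμ ≤ ∫ m dμ`.
Expanding `c(a)²` as the `μ ⊗ μ`-measure of pairs `(p, q)` in `B_{a-x}^r` and integrating over `a`
first, for fixed `(p, q)` the set `T` of admissible `a` has diameter `< 2r`, hence lies in every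
`B_a^{2r}` with `a ∈ T`: the inner integral `∫_T 1/m dμ` is at most `1`, and `T` is empty unless
`|p - q| < 2r`. This is a Cauchy-Schwarz argument needing no finiteness of `μ`.
-/

open Metric Set
open scoped ENNReal

theorem ENNReal.two_mul_le_add_sq_mul_inv (c m : ℝ≥0∞) : 2 * c ≤ m + c ^ 2 * m⁻¹ := by
  rcases eq_or_ne m 0 with rfl | hm₀
  · rcases eq_or_ne c 0 with rfl | hc₀ <;> simp [*]
  rcases eq_or_ne m ∞ with rfl | hm
  · simp
  have h_expand : (m + c ^ 2 * m⁻¹) * m = m ^ 2 + c ^ 2 := by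
    rw [add_mul, mul_assoc, ENNReal.inv_mul_cancel hm₀ hm, mul_one, ← sq]
  rw [← ENNReal.mul_le_mul_iff_left hm₀ hm, h_expand]
  rcases eq_or_ne c ∞ with rfl | hc
  · simp [hm₀]
  lift c to NNReal using hc
  lift m to NNReal using hm
  exact_mod_cast (two_mul_le_add_sq c m).trans_eq (by ring)

theorem setLIntegral_inv_le_one {α : Type*} [MeasurableSpace α] {μ : Measure α} {s : Set α}
    (hs : MeasurableSet s) {m : α → ℝ≥0∞} (h : ∀ a ∈ s, μ s ≤ m a) :
    ∫⁻ a in s, (m a)⁻¹ ∂μ ≤ 1 :=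
  calc ∫⁻ a in s, (m a)⁻¹ ∂μ ≤ ∫⁻ _ in s, (μ s)⁻¹ ∂μ :=
        setLIntegral_mono' hs fun a ha => ENNReal.inv_le_inv.2 (h a ha)
    _ = (μ s)⁻¹ * μ s := setLIntegral_const s _
    _ ≤ 1 := ENNReal.inv_mul_le_one _

section Isometry

variable {X : Type*} [PseudoMetricSpace X] [MeasurableSpace X] [OpensMeasurableSpace X]
  [SecondCountableTopology X] (μ : Measure X) [SFinite μ]

theorem measurable_measure_ball_comp {f : X → X} (hf : Continuous f) (r : ℝ) :
    Measurable fun a => μ (ball (f a) r) :=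
  measurable_measure_prodMk_left
    (isOpen_lt (continuous_snd.dist (hf.comp continuous_fst)) continuous_const).measurableSet

theorem lintegral_sq_measure_ball_mul_inv_le {τ : X → X} (hτ : Isometry τ) (r : ℝ) :
    ∫⁻ a, μ (ball (τ a) r) ^ 2 * (μ (ball a (2 * r)))⁻¹ ∂μ ≤ ∫⁻ a, μ (ball a (2 * r)) ∂μ := by
  set m : X → ℝ≥0∞ := fun a => μ (ball a (2 * r))
  have hτc := hτ.continuous
  let S : Set (X × X × X) := {z | z.2.1 ∈ ball (τ z.1) r ∧ z.2.2 ∈ ball (τ z.1) r}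
  have hS : MeasurableSet S := by
    refine (IsOpen.inter ?_ ?_).measurableSet <;>
      exact isOpen_lt (by fun_prop) continuous_const
  let F : X × X × X → ℝ≥0∞ := S.indicator fun z => (m z.1)⁻¹
  have hF : Measurable F :=
    ((measurable_measure_ball_comp μ continuous_id _).comp measurable_fst).inv.indicator hS
  have h_slice (a : X) :
      ∫⁻ pq, F (a, pq) ∂(μ.prod μ) = μ (ball (τ a) r) ^ 2 * (m a)⁻¹ := by
    change ∫⁻ pq, (ball (τ a) r ×ˢ ball (τ a) r).indicator (fun _ => (m a)⁻¹) pq ∂(μ.prod μ) = _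
    rw [lintegral_indicator_const (measurableSet_ball.prod measurableSet_ball),
      Measure.prod_prod, sq, mul_comm]
  have h_fiber (pq : X × X) :
      ∫⁻ a, F (a, pq) ∂μ ≤ {pq : X × X | dist pq.2 pq.1 < 2 * r}.indicator 1 pq := by
    obtain ⟨p, q⟩ := pq
    let T : Set X := {a | p ∈ ball (τ a) r ∧ q ∈ ball (τ a) r}
    have hT : MeasurableSet T := by
      refine (IsOpen.inter ?_ ?_).measurableSet <;>
        exact isOpen_lt (by fun_prop) continuous_const
    change ∫⁻ a, T.indicator (fun a => (m a)⁻¹) a ∂μ ≤ _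
    rw [lintegral_indicator hT]
    by_cases hpq : dist q p < 2 * r
    · rw [indicator_of_mem (show (p, q) ∈ {pq : X × X | dist pq.2 pq.1 < 2 * r} from hpq)]
      refine setLIntegral_inv_le_one hT fun a ha => measure_mono fun a' ha' => ?_
      rw [mem_ball, ← hτ.dist_eq]
      calc dist (τ a') (τ a) ≤ dist (τ a') p + dist p (τ a) := dist_triangle _ _ _
        _ < r + r := add_lt_add (mem_ball'.1 ha'.1) ha.1
        _ = 2 * r := by ring
    · have hT_empty : T = ∅ := eq_empty_of_forall_notMem fun a ha => hpq <|
        calc dist q p ≤ dist q (τ a) + dist (τ a) p := dist_triangle _ _ _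
          _ < r + r := add_lt_add ha.2 (mem_ball'.1 ha.1)
          _ = 2 * r := by ring
      simp [hT_empty]
  have hD : MeasurableSet {pq : X × X | dist pq.2 pq.1 < 2 * r} :=
    (isOpen_lt (continuous_snd.dist continuous_fst) continuous_const).measurableSet
  calc ∫⁻ a, μ (ball (τ a) r) ^ 2 * (m a)⁻¹ ∂μ = ∫⁻ a, ∫⁻ pq, F (a, pq) ∂(μ.prod μ) ∂μ := by
        simp_rw [h_slice]
    _ = ∫⁻ pq, ∫⁻ a, F (a, pq) ∂μ ∂(μ.prod μ) := lintegral_lintegral_swap hF.aemeasurable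
    _ ≤ ∫⁻ pq, {pq : X × X | dist pq.2 pq.1 < 2 * r}.indicator 1 pq ∂(μ.prod μ) :=
        lintegral_mono h_fiber
    _ = ∫⁻ a, m a ∂μ := by
        rw [lintegral_indicator_one hD, Measure.prod_apply hD]
        rfl

theorem lintegral_measure_ball_isometry_le {τ : X → X} (hτ : Isometry τ) (r : ℝ) :
    ∫⁻ a, μ (ball (τ a) r) ∂μ ≤ ∫⁻ a, μ (ball a (2 * r)) ∂μ := by
  set m : X → ℝ≥0∞ := fun a => μ (ball a (2 * r))
  set c : X → ℝ≥0∞ := fun a => μ (ball (τ a) r)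
  refine (ENNReal.mul_le_mul_iff_right two_ne_zero ENNReal.ofNat_ne_top).1 ?_
  calc 2 * ∫⁻ a, c a ∂μ = ∫⁻ a, 2 * c a ∂μ :=
        (lintegral_const_mul 2 (measurable_measure_ball_comp μ hτ.continuous r)).symm
    _ ≤ ∫⁻ a, (m a + c a ^ 2 * (m a)⁻¹) ∂μ :=
        lintegral_mono fun a => ENNReal.two_mul_le_add_sq_mul_inv _ _
    _ = ∫⁻ a, m a ∂μ + ∫⁻ a, c a ^ 2 * (m a)⁻¹ ∂μ :=
        lintegral_add_left (measurable_measure_ball_comp μ continuous_id _) _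
    _ ≤ ∫⁻ a, m a ∂μ + ∫⁻ a, m a ∂μ :=
        add_le_add le_rfl (lintegral_sq_measure_ball_mul_inv_le μ hτ r)
    _ = 2 * ∫⁻ a, m a ∂μ := (two_mul _).symm

end Isometry

section Euclidean

variable {d : ℕ}

local notation "E" => EuclideanSpace ℝ (Fin d)

instance (ρ : Measure E) [SFinite ρ] (n : ℕ) : SFinite (convPow ρ n) := by
  induction n with
  | zero => exact inferInstanceAs (SFinite (Measure.dirac _))
  | succ n ih => exact inferInstanceAs (SFinite (Measure.map _ _))

instance (ρ : Measure E) [SFinite ρ] : SFinite (mrefl ρ) :=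
  inferInstanceAs (SFinite (Measure.map _ _))

instance (ρ : Measure E) [SFinite ρ] : SFinite (occMeasure ρ) :=
  inferInstanceAs (SFinite (Measure.sum _))

theorem mconv_mrefl_mrefl (μ ν : Measure E) [SFinite μ] [SFinite ν] :
    mconv (mrefl μ) (mrefl ν) = mrefl (mconv μ ν) := by
  unfold mconv mrefl
  rw [Measure.map_prod_map _ _ measurable_neg measurable_neg,
    Measure.map_map measurable_add (measurable_neg.prodMap measurable_neg),
    Measure.map_map measurable_neg measurable_add]
  congr 1
  funext p
  exact (neg_add _ _).symm

theorem convPow_mrefl (ρ : Measure E) [SFinite ρ] (n : ℕ) :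
    convPow (mrefl ρ) n = mrefl (convPow ρ n) := by
  induction n with
  | zero => simp [convPow, mrefl, Measure.map_dirac' measurable_neg]
  | succ n ih => rw [convPow, convPow, ih, mconv_mrefl_mrefl]

theorem occMeasure_mrefl (ρ : Measure E) [SFinite ρ] :
    occMeasure (mrefl ρ) = mrefl (occMeasure ρ) := by
  simp only [occMeasure, convPow_mrefl]
  exact (Measure.map_sum measurable_neg.aemeasurable).symm

theorem mconv_mrefl_apply_ball (μ : Measure E) [SFinite μ] (x : E) (r : ℝ) :
    mconv μ (mrefl μ) (ball x r) = ∫⁻ a, μ (ball (a - x) r) ∂μ := by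
  rw [mconv, Measure.map_apply measurable_add measurableSet_ball,
    Measure.prod_apply (measurable_add measurableSet_ball)]
  refine lintegral_congr fun a => ?_
  rw [mrefl, Measure.map_apply measurable_neg
    (measurable_prodMk_left (measurable_add measurableSet_ball))]
  congr 1
  ext w
  simp only [mem_preimage, mem_ball, dist_eq_norm, ← norm_neg (w - (a - x))]
  congr! 2
  abel

theorem mconv_mrefl_ball_le (μ : Measure E) [SFinite μ] (x : E) (r : ℝ) :
    mconv μ (mrefl μ) (ball x r) ≤ mconv μ (mrefl μ) (ball 0 (2 * r)) := by
  simpa only [mconv_mrefl_apply_ball, sub_zero, IsometryEquiv.subRight_apply] using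
    lintegral_measure_ball_isometry_le μ (IsometryEquiv.subRight x).isometry r

end Euclidean

theorem stmt9_general (d : ℕ)
    (ρ : Measure (EuclideanSpace ℝ (Fin d))) [IsProbabilityMeasure ρ]
    (x : EuclideanSpace ℝ (Fin d)) (r : ℝ) :
    mconv (occMeasure ρ) (occMeasure (mrefl ρ)) (Metric.ball x r) ≤
      mconv (occMeasure ρ) (occMeasure (mrefl ρ)) (Metric.ball 0 (2 * r)) := by
  rw [occMeasure_mrefl]
  exact mconv_mrefl_ball_le _ x r

/-- Translation bound for the expected occupation measure of the
two-sided walk: `(U * U⁻)(B_x^r) ≤ (U * U⁻)(B_0^{2r})` for every `x` and `r > 0`. -/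
theorem stmt9 (d : ℕ) (hd : 1 ≤ d)
    (ρ : Measure (EuclideanSpace ℝ (Fin d))) [IsProbabilityMeasure ρ]
    (x : EuclideanSpace ℝ (Fin d)) (r : ℝ) (hr : 0 < r) :
    mconv (occMeasure ρ) (occMeasure (mrefl ρ)) (Metric.ball x r) ≤
      mconv (occMeasure ρ) (occMeasure (mrefl ρ)) (Metric.ball 0 (2 * r)) :=
  stmt9_general d ρ x r
end

section
/- Let F be a probability measure on ℝ with F((−∞,0)) = 0, and suppose there exist constants c > 0, x_0 > 0 and α ∈ (0, 1/2) such that ∫_{[0,T]} x² dF(x) ≥ c·T^{2−α} for all T ≥ x_0. Let F̂(z) = ∫ exp(izx) dF(x). Then there exists ε > 0 such that ∫_{−ε}^{ε} |1 − F̂(z)|^{−2} dz < ∞. -/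
open MeasureTheory

/-! Near `0`, `1 - cos (z x) ≥ (z x)² / 3` for `x ≤ 1 / |z|`, so the moment growth
`∫_{[0,T]} x² dF ≥ c T^{2-α}` at `T = 1 / |z|` gives `|1 - F̂(z)| ≥ Re (1 - F̂(z)) ≥ (c / 3) |z|^α`.
Hence `|1 - F̂(z)|⁻² ≤ (3 / c)² |z|^{-2α}`, which is integrable near `0` because `2α < 1`. -/

theorem Real.sq_div_three_le_one_sub_cos {t : ℝ} (ht : |t| ≤ 1) : t ^ 2 / 3 ≤ 1 - Real.cos t := by
  have hcos : Real.cos t - (1 - t ^ 2 / 2) ≤ |t| ^ 4 * (5 / 96) := le_of_abs_le (Real.cos_bound ht)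
  have ht4 : |t| ^ 4 ≤ t ^ 2 := by
    simpa [sq_abs] using pow_le_pow_of_le_one (abs_nonneg t) ht (by norm_num : 2 ≤ 4)
  nlinarith

namespace MeasureTheory

theorem re_one_sub_charFun (μ : Measure ℝ) [IsProbabilityMeasure μ] (t : ℝ) :
    (1 - charFun μ t).re = ∫ x, (1 - Real.cos (t * x)) ∂μ := by
  have hint : Integrable (fun x : ℝ ↦ Complex.exp (t * x * Complex.I)) μ :=
    (integrable_const (1 : ℝ)).mono' (by fun_prop)
      (ae_of_all _ fun x ↦ by rw [← Complex.ofReal_mul, Complex.norm_exp_ofReal_mul_I])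
  have hcos : Integrable (fun x ↦ Real.cos (t * x)) μ :=
    (integrable_const (1 : ℝ)).mono' (by fun_prop)
      (ae_of_all _ fun x ↦ by simpa using Real.abs_cos_le_one (t * x))
  rw [integral_sub (integrable_const 1) hcos, charFun_apply_real, Complex.sub_re,
    Complex.one_re, ← RCLike.re_eq_complex_re, ← integral_re hint]
  simp [← Complex.ofReal_mul, Complex.exp_ofReal_mul_I_re]

theorem setIntegral_sq_le_re_one_sub_charFun (μ : Measure ℝ) [IsProbabilityMeasure μ]
    {s : Set ℝ} (hs : MeasurableSet s) {t : ℝ} (hst : ∀ x ∈ s, |t * x| ≤ 1) :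
    t ^ 2 / 3 * ∫ x in s, x ^ 2 ∂μ ≤ (1 - charFun μ t).re := by
  have hcos : Integrable (fun x ↦ 1 - Real.cos (t * x)) μ :=
    (integrable_const (2 : ℝ)).mono' (by fun_prop) (ae_of_all _ fun x ↦ by
      rw [Real.norm_eq_abs, abs_le]
      constructor <;> linarith [Real.neg_one_le_cos (t * x), Real.cos_le_one (t * x)])
  rw [re_one_sub_charFun, ← integral_const_mul]
  calc ∫ x in s, t ^ 2 / 3 * x ^ 2 ∂μ
      ≤ ∫ x in s, (1 - Real.cos (t * x)) ∂μ := by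
        refine integral_mono_of_nonneg (ae_of_all _ fun x ↦ by positivity) hcos.integrableOn ?_
        filter_upwards [ae_restrict_mem hs] with x hx
        simpa [mul_pow, mul_div_right_comm] using Real.sq_div_three_le_one_sub_cos (hst x hx)
    _ ≤ ∫ x, (1 - Real.cos (t * x)) ∂μ :=
        setIntegral_le_integral hcos (ae_of_all _ fun x ↦ sub_nonneg.2 (Real.cos_le_one _))

theorem mul_rpow_le_norm_one_sub_charFun (μ : Measure ℝ) [IsProbabilityMeasure μ]
    {c x₀ α : ℝ} (hmom : ∀ T : ℝ, x₀ ≤ T → c * T ^ (2 - α) ≤ ∫ x in Set.Icc 0 T, x ^ 2 ∂μ)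
    {z : ℝ} (hz : z ≠ 0) (hzx₀ : x₀ ≤ |z|⁻¹) :
    c / 3 * |z| ^ α ≤ ‖1 - charFun μ z‖ := by
  have hz' : 0 < |z| := abs_pos.2 hz
  have hpow : z ^ 2 * |z|⁻¹ ^ (2 - α) = |z| ^ α := by
    rw [← sq_abs, Real.inv_rpow hz'.le, ← Real.rpow_neg hz'.le, ← Real.rpow_natCast,
      ← Real.rpow_add hz']
    norm_num
  have hst : ∀ x ∈ Set.Icc 0 |z|⁻¹, |z * x| ≤ 1 := fun x hx ↦ by
    rw [abs_mul, abs_of_nonneg hx.1]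
    calc |z| * x ≤ |z| * |z|⁻¹ := by gcongr; exact hx.2
      _ = 1 := mul_inv_cancel₀ hz'.ne'
  calc c / 3 * |z| ^ α = z ^ 2 / 3 * (c * |z|⁻¹ ^ (2 - α)) := by rw [← hpow]; ring
    _ ≤ z ^ 2 / 3 * ∫ x in Set.Icc 0 |z|⁻¹, x ^ 2 ∂μ := by gcongr; exact hmom _ hzx₀
    _ ≤ (1 - charFun μ z).re := setIntegral_sq_le_re_one_sub_charFun μ measurableSet_Icc hst
    _ ≤ ‖1 - charFun μ z‖ := Complex.re_le_norm _

end MeasureTheory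

theorem setLIntegral_inv_ofReal_norm_sq_lt_top {E : Type*} [NormedAddCommGroup E]
    {g : ℝ → E} {C α ε : ℝ} (hC : 0 < C) (hα : α < 1 / 2)
    (hg : ∀ z, z ≠ 0 → |z| < ε → C * |z| ^ α ≤ ‖g z‖) :
    ∫⁻ z in Set.Ioo (-ε) ε, (ENNReal.ofReal (‖g z‖ ^ 2))⁻¹ < ⊤ := by
  have hint : IntegrableOn (fun z : ℝ ↦ C⁻¹ ^ 2 * ‖z‖ ^ (-(2 * α))) (Set.Ioo (-ε) ε) := by
    rw [← Real.ball_zero_eq_Ioo]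
    refine integrableOn_ball_of_norm_le_rpow (C := C⁻¹ ^ 2) (α := 2 * α) (by simp)
      (by simp; linarith) (ae_of_all _ fun z ↦ le_of_eq ?_)
      ((measurable_norm.pow_const _).const_mul _).aestronglyMeasurable
    rw [Real.norm_eq_abs, abs_of_nonneg (by positivity)]
  refine lt_of_le_of_lt (setLIntegral_mono_ae' measurableSet_Ioo ?_) hint.setLIntegral_lt_top
  filter_upwards [Measure.ae_ne volume 0] with z hz hzε
  have hz' : 0 < |z| := abs_pos.2 hz
  have hb : 0 < C * |z| ^ α := by positivity
  have hinv : ((C * |z| ^ α) ^ 2)⁻¹ = C⁻¹ ^ 2 * ‖z‖ ^ (-(2 * α)) := by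
    rw [Real.norm_eq_abs, Real.rpow_neg hz'.le, mul_pow, mul_inv, inv_pow,
      ← Real.rpow_mul_natCast hz'.le]
    push_cast
    ring_nf
  rw [← hinv, ENNReal.ofReal_inv_of_pos (by positivity)]
  exact ENNReal.inv_le_inv' (ENNReal.ofReal_le_ofReal
    (pow_le_pow_left₀ hb.le (hg z hz (abs_lt.2 hzε)) 2))

theorem stmt14_general (F : Measure ℝ) [IsProbabilityMeasure F]
    (c x₀ α : ℝ) (hc : 0 < c) (hx₀ : 0 < x₀) (hα2 : α < 1 / 2)
    (hmom : ∀ T : ℝ, x₀ ≤ T → c * T ^ (2 - α) ≤ ∫ x in Set.Icc 0 T, x ^ 2 ∂F) :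
    ∃ ε : ℝ, 0 < ε ∧
      (∫⁻ z in Set.Ioo (-ε) ε,
        (ENNReal.ofReal
          (‖(1 : ℂ) - ∫ x, Complex.exp (Complex.I * ((z * x : ℝ) : ℂ)) ∂F‖ ^ 2))⁻¹
        ∂volume) < ⊤ := by
  have hcharFun : ∀ z : ℝ, ∫ x, Complex.exp (Complex.I * ((z * x : ℝ) : ℂ)) ∂F = charFun F z :=
    fun z ↦ by simp [charFun_apply_real, mul_comm]
  refine ⟨x₀⁻¹, inv_pos.2 hx₀, ?_⟩
  simp only [hcharFun]
  refine setLIntegral_inv_ofReal_norm_sq_lt_top (C := c / 3) (by positivity) hα2 fun z hz hzx₀ ↦ ?_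
  exact mul_rpow_le_norm_one_sub_charFun F hmom hz
    ((le_inv_comm₀ (abs_pos.2 hz) hx₀).1 hzx₀.le)

/-- Let `F` be a probability measure on `ℝ` supported on `[0,∞)` whose
truncated second moments satisfy `∫_{[0,T]} x² dF(x) ≥ c T^{2−α}` for `T ≥ x₀`, with
`α ∈ (0,1/2)`. Then `∫_{−ε}^{ε} |1 − F̂(z)|^{−2} dz < ∞` for some `ε > 0`. -/
theorem stmt14 (F : Measure ℝ) [IsProbabilityMeasure F]
    (hneg : F (Set.Iio 0) = 0)
    (c x₀ α : ℝ) (hc : 0 < c) (hx₀ : 0 < x₀) (hα : 0 < α) (hα2 : α < 1 / 2)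
    (hmom : ∀ T : ℝ, x₀ ≤ T → c * T ^ (2 - α) ≤ ∫ x in Set.Icc 0 T, x ^ 2 ∂F) :
    ∃ ε : ℝ, 0 < ε ∧
      (∫⁻ z in Set.Ioo (-ε) ε,
        (ENNReal.ofReal
          (‖(1 : ℂ) - ∫ x, Complex.exp (Complex.I * ((z * x : ℝ) : ℂ)) ∂F‖ ^ 2))⁻¹
        ∂volume) < ⊤ :=
  stmt14_general F c x₀ α hc hx₀ hα2 hmom
end
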